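/- arXiv:1201.0791 — 3 statements merged into one kernel-verified Lean document; each statement's English description precedes it below -/
import Mathlib

section
/- Let H be a vector space equipped with a nondecreasing family of norms ‖·‖_k (k ∈ ℕ) admitting smoothing operators: for each t > 1 there is a linear map S(t): H → H such that for all integers p > q ≥ 0 there are constants C_{p,q} > 0 with ‖S(t)f‖_p ≤ C_{p,q} t^{p−q} ‖f‖_q and ‖f − S(t)f‖_q ≤ C_{p,q} t^{q−p} ‖f‖_p for all f ∈ H. Then for all integers 0 ≤ l ≤ m ≤ n there exists a constant C > 0 such that for all f ∈ H: ‖f‖_m^{n−l} ≤ C · ‖f‖_n^{m−l} · ‖f‖_l^{n−m} (the interpolation inequality). -/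
/-!
Splitting `f = S(t) f + (f - S(t) f)` gives, for every `t > 1`,
`‖f‖_m ≤ K (t^(m-l) ‖f‖_l + t^(-(n-m)) ‖f‖_n)`.
If `‖f‖_l = 0`, letting `t → ∞` gives `‖f‖_m = 0`. Otherwise choose `t` with
`t^(n-l) = 2 ‖f‖_n / ‖f‖_l`, which makes the two terms comparable, and raise the resulting bound
`‖f‖_m ≤ 2 K t^(m-l) ‖f‖_l` to the power `n - l`.
-/

open Filter Topology

lemma nonpos_of_forall_one_lt_le_mul_inv_pow {b : ℕ} (hb : b ≠ 0) {M c : ℝ}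
    (h : ∀ t : ℝ, 1 < t → M ≤ c * (t ^ b)⁻¹) : M ≤ 0 := by
  have hlim : Tendsto (fun t : ℝ => c * (t ^ b)⁻¹) atTop (𝓝 0) := by
    simpa using (tendsto_inv_atTop_zero.comp (tendsto_pow_atTop hb)).const_mul c
  exact ge_of_tendsto hlim ((eventually_gt_atTop 1).mono h)

lemma interpolation_of_forall_one_lt {a b : ℕ} (hb : b ≠ 0) {K M A B : ℝ}
    (hM : 0 ≤ M) (hB : 0 ≤ B) (hBA : B ≤ A)
    (h : ∀ t : ℝ, 1 < t → M ≤ K * (t ^ a * B + (t ^ b)⁻¹ * A)) :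
    M ^ (a + b) ≤ 2 ^ a * (2 * K) ^ (a + b) * A ^ a * B ^ b := by
  rcases hB.eq_or_lt with rfl | hB
  · have : M ≤ 0 := nonpos_of_forall_one_lt_le_mul_inv_pow (c := K * A) hb fun t ht =>
      (h t ht).trans_eq (by ring)
    rw [le_antisymm this hM, zero_pow (by omega), zero_pow hb, mul_zero]
  set t := (2 * A / B) ^ ((a + b : ℕ) : ℝ)⁻¹
  have hAB : 1 < 2 * A / B := by rw [one_lt_div hB]; linarith
  have ht_pow : t ^ (a + b) = 2 * A / B :=
    Real.rpow_inv_natCast_pow (by positivity) (by omega)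
  have ht : 1 < t := Real.one_lt_rpow hAB (by positivity)
  have hbalance : (t ^ b)⁻¹ * A = t ^ a * B / 2 := by
    have hprod : t ^ a * t ^ b * B = 2 * A := by
      rw [← pow_add, ht_pow]; field_simp
    have : t ^ b ≠ 0 := by positivity
    field_simp
    linear_combination -hprod
  have hM2 : M ≤ 2 * K * t ^ a * B := by
    have := h t ht
    rw [hbalance] at this
    linarith [show K * (t ^ a * B + t ^ a * B / 2) = 3 / 2 * (K * t ^ a * B) by ring]
  calc M ^ (a + b) ≤ (2 * K * t ^ a * B) ^ (a + b) := pow_le_pow_left₀ hM hM2 _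
    _ = (2 * K) ^ (a + b) * (t ^ (a + b)) ^ a * B ^ (a + b) := by ring
    _ = 2 ^ a * (2 * K) ^ (a + b) * A ^ a * B ^ b := by
      rw [ht_pow, div_pow, pow_add B]
      field_simp
      ring

theorem stmt_2_general (H : Type*) [AddCommGroup H] [Module ℝ H]
    (N : ℕ → H → ℝ)
    (hnonneg : ∀ k f, 0 ≤ N k f)
    (hnorm_add : ∀ k f g, N k (f + g) ≤ N k f + N k g)
    (hmono : ∀ (k k' : ℕ) f, k' ≤ k → N k' f ≤ N k f)
    (S : ℝ → H →ₗ[ℝ] H)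
    (C : ℕ → ℕ → ℝ)
    (hCpos : ∀ p q, 0 < C p q)
    (hS1 : ∀ t : ℝ, 1 < t → ∀ p q : ℕ, q < p → ∀ f,
      N p (S t f) ≤ C p q * t ^ (p - q) * N q f)
    (hS2 : ∀ t : ℝ, 1 < t → ∀ p q : ℕ, q < p → ∀ f,
      N q (f - S t f) ≤ C p q * t ^ (-((p : ℤ) - q)) * N p f) :
    ∀ l m n : ℕ, l ≤ m → m ≤ n →
      ∃ C' > (0 : ℝ), ∀ f : H,
        N m f ^ (n - l) ≤ C' * N n f ^ (m - l) * N l f ^ (n - m) := by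
  intro l m n hlm hmn
  rcases hlm.eq_or_lt with rfl | hlm
  · exact ⟨1, one_pos, fun f => by simp⟩
  rcases hmn.eq_or_lt with rfl | hmn
  · exact ⟨1, one_pos, fun f => by simp⟩
  set K := max (C m l) (C n m)
  have hsplit : ∀ f, ∀ t : ℝ, 1 < t →
      N m f ≤ K * (t ^ (m - l) * N l f + (t ^ (n - m))⁻¹ * N n f) := by
    intro f t ht
    have hremainder := hS2 t ht n m hmn f
    rw [← Nat.cast_sub hmn.le, zpow_neg, zpow_natCast] at hremainder
    calc N m f = N m (S t f + (f - S t f)) := by rw [add_sub_cancel]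
      _ ≤ N m (S t f) + N m (f - S t f) := hnorm_add _ _ _
      _ ≤ C m l * t ^ (m - l) * N l f + C n m * (t ^ (n - m))⁻¹ * N n f :=
        add_le_add (hS1 t ht m l hlm f) hremainder
      _ ≤ K * t ^ (m - l) * N l f + K * (t ^ (n - m))⁻¹ * N n f := by
        gcongr
        exacts [hnonneg .., le_max_left .., hnonneg .., le_max_right ..]
      _ = K * (t ^ (m - l) * N l f + (t ^ (n - m))⁻¹ * N n f) := by ring
  have hK : 0 < K := lt_max_of_lt_left (hCpos m l)
  refine ⟨2 ^ (m - l) * (2 * K) ^ (n - l), by positivity, fun f => ?_⟩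
  have := interpolation_of_forall_one_lt (a := m - l) (b := n - m) (by omega)
    (hnonneg m f) (hnonneg l f) (hmono n l f (by omega)) (hsplit f)
  rwa [show m - l + (n - m) = n - l by omega] at this

/-- A vector space with a nondecreasing family of norms admitting smoothing
operators satisfies the interpolation inequality
‖f‖_m^(n−l) ≤ C ‖f‖_n^(m−l) ‖f‖_l^(n−m) for l ≤ m ≤ n. -/
theorem stmt_2 (H : Type*) [AddCommGroup H] [Module ℝ H]
    (N : ℕ → H → ℝ)
    (hnonneg : ∀ k f, 0 ≤ N k f)
    (hnorm_add : ∀ k f g, N k (f + g) ≤ N k f + N k g)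
    (hnorm_smul : ∀ k (c : ℝ) f, N k (c • f) = |c| * N k f)
    (hmono : ∀ (k k' : ℕ) f, k' ≤ k → N k' f ≤ N k f)
    (S : ℝ → H →ₗ[ℝ] H)
    (C : ℕ → ℕ → ℝ)
    (hCpos : ∀ p q, 0 < C p q)
    (hS1 : ∀ t : ℝ, 1 < t → ∀ p q : ℕ, q < p → ∀ f,
      N p (S t f) ≤ C p q * t ^ (p - q) * N q f)
    (hS2 : ∀ t : ℝ, 1 < t → ∀ p q : ℕ, q < p → ∀ f,
      N q (f - S t f) ≤ C p q * t ^ (-((p : ℤ) - q)) * N p f) :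
    ∀ l m n : ℕ, l ≤ m → m ≤ n →
      ∃ C' > (0 : ℝ), ∀ f : H,
        N m f ^ (n - l) ≤ C' * N n f ^ (m - l) * N l f ^ (n - m) :=
  stmt_2_general H N hnonneg hnorm_add hmono S C hCpos hS1 hS2
end

section
/- Let B ⊂ ℂⁿ be a closed ball on which the ∂̄-complex admits a chain homotopy operator P satisfying ∂̄P + P∂̄ = Id on mixed tensors (sections of ∧^i T_{1,0} ⊗ ∧^{j+1} T*_{0,1}). Let β be a holomorphic Poisson bivector on B (∂̄β = 0, [β,β] = 0), with Poisson differential d_β = [β, ·] anticommuting with ∂̄. Suppose ε = ε₁ + ε₂ + ε₃ ∈ Γ(∧²L*) satisfies (∂̄ + d_β)ε = 0 (componentwise: ∂̄ε₃ = 0 and ∂̄ε₂ + d_βε₃ = 0). Define V = P(d_β Pε₃ − ε₂) − Pε₃ ∈ Γ(L*). Then ε + (∂̄ + d_β)V has vanishing ε₂ and ε₃ components, i.e., it is a (2,0)-bivector field. -/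
/-! Write `V = P w - P ε₃` with `w = d_β P ε₃ - ε₂`. Since `∂̄ ε₃ = 0`, the homotopy formula gives
`∂̄ P ε₃ = ε₃`; then anticommutation and `∂̄ ε₂ + d_β ε₃ = 0` show that `w` is `∂̄`-closed, so
`∂̄ P w = w` as well. Hence `ε + (∂̄ + d_β) V = ε₁ + d_β P w`, and `d_β P w` is a bivector because
`w` is mixed, `P w` a vector field, and `d_β` raises the contravariant degree. -/

section HomotopyGauge

variable {R M : Type*} [Semiring R] [AddCommGroup M] [Module R M] {dbar dβ P : M →ₗ[R] M}

theorem dbar_homotopy_of_dbar_eq_zero (hhom : ∀ x, dbar (P x) + P (dbar x) = x) {x : M}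
    (hx : dbar x = 0) : dbar (P x) = x := by
  simpa [hx] using hhom x

theorem dbar_dβ_homotopy_sub_eq_zero (hhom : ∀ x, dbar (P x) + P (dbar x) = x)
    (hanti : ∀ x, dbar (dβ x) + dβ (dbar x) = 0) {ε₂ ε₃ : M}
    (hclosed2 : dbar ε₂ + dβ ε₃ = 0) (hclosed3 : dbar ε₃ = 0) :
    dbar (dβ (P ε₃) - ε₂) = 0 := by
  have hanti₃ := hanti (P ε₃)
  rw [dbar_homotopy_of_dbar_eq_zero hhom hclosed3] at hanti₃
  rw [map_sub]
  linear_combination (norm := abel) hanti₃ - hclosed2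

theorem add_dbar_add_dβ_gauge_eq (hhom : ∀ x, dbar (P x) + P (dbar x) = x)
    (hanti : ∀ x, dbar (dβ x) + dβ (dbar x) = 0) (ε₁ : M) {ε₂ ε₃ : M}
    (hclosed2 : dbar ε₂ + dβ ε₃ = 0) (hclosed3 : dbar ε₃ = 0) :
    (ε₁ + ε₂ + ε₃) +
      (dbar (P (dβ (P ε₃) - ε₂) - P ε₃) + dβ (P (dβ (P ε₃) - ε₂) - P ε₃)) =
      ε₁ + dβ (P (dβ (P ε₃) - ε₂)) := by
  rw [map_sub dbar, map_sub dβ,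
    dbar_homotopy_of_dbar_eq_zero hhom (dbar_dβ_homotopy_sub_eq_zero hhom hanti hclosed2 hclosed3),
    dbar_homotopy_of_dbar_eq_zero hhom hclosed3]
  abel

end HomotopyGauge

theorem stmt_8_general {M : Type*} [AddCommGroup M] [Module ℝ M]
    -- type components: Vec = (1,0)-vector fields, Form = (0,1)-forms,
    -- T1 = bivectors, T2 = mixed, T3 = (0,2)-forms
    (Vec Form T1 T2 T3 : Submodule ℝ M)
    (dbar dβ P : M →ₗ[ℝ] M)
    (hhom : ∀ x, dbar (P x) + P (dbar x) = x)
    (hanti : ∀ x, dbar (dβ x) + dβ (dbar x) = 0)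
    (hdβForm : ∀ x ∈ Form, dβ x ∈ T2)
    (hdβVec : ∀ x ∈ Vec, dβ x ∈ T1)
    (hPT3 : ∀ x ∈ T3, P x ∈ Form)
    (hPT2 : ∀ x ∈ T2, P x ∈ Vec)
    (ε₁ ε₂ ε₃ : M) (hε₁ : ε₁ ∈ T1) (hε₂ : ε₂ ∈ T2) (hε₃ : ε₃ ∈ T3)
    (hclosed2 : dbar ε₂ + dβ ε₃ = 0)
    (hclosed3 : dbar ε₃ = 0) :
    (ε₁ + ε₂ + ε₃) +
      (dbar (P (dβ (P ε₃) - ε₂) - P ε₃) + dβ (P (dβ (P ε₃) - ε₂) - P ε₃)) ∈ T1 := by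
  rw [add_dbar_add_dβ_gauge_eq hhom hanti ε₁ hclosed2 hclosed3]
  have hmixed : dβ (P ε₃) - ε₂ ∈ T2 := T2.sub_mem (hdβForm _ (hPT3 _ hε₃)) hε₂
  exact T1.add_mem hε₁ (hdβVec _ (hPT2 _ hmixed))

/-- Given a ∂̄-chain homotopy P (∂̄P + P∂̄ = Id), a holomorphic Poisson
differential d_β anticommuting with ∂̄, and ε = ε₁ + ε₂ + ε₃ with (∂̄ + d_β)ε = 0
componentwise, the generalized vector field V = P(d_β Pε₃ − ε₂) − Pε₃ satisfies:
ε + (∂̄ + d_β)V is a pure (2,0)-bivector field (lies in the bivector component T1). -/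
theorem stmt_8 {M : Type*} [AddCommGroup M] [Module ℝ M]
    -- type components: Vec = (1,0)-vector fields, Form = (0,1)-forms,
    -- T1 = bivectors, T2 = mixed, T3 = (0,2)-forms
    (Vec Form T1 T2 T3 : Submodule ℝ M)
    (dbar dβ P : M →ₗ[ℝ] M)
    (hhom : ∀ x, dbar (P x) + P (dbar x) = x)
    (hanti : ∀ x, dbar (dβ x) + dβ (dbar x) = 0)
    (hdbarVec : ∀ x ∈ Vec, dbar x ∈ T2)
    (hdbarForm : ∀ x ∈ Form, dbar x ∈ T3)
    (hdβForm : ∀ x ∈ Form, dβ x ∈ T2)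
    (hdβVec : ∀ x ∈ Vec, dβ x ∈ T1)
    (hPT3 : ∀ x ∈ T3, P x ∈ Form)
    (hPT2 : ∀ x ∈ T2, P x ∈ Vec)
    (ε₁ ε₂ ε₃ : M) (hε₁ : ε₁ ∈ T1) (hε₂ : ε₂ ∈ T2) (hε₃ : ε₃ ∈ T3)
    (hclosed2 : dbar ε₂ + dβ ε₃ = 0)
    (hclosed3 : dbar ε₃ = 0) :
    (ε₁ + ε₂ + ε₃) +
      (dbar (P (dβ (P ε₃) - ε₂) - P ε₃) + dβ (P (dβ (P ε₃) - ε₂) - P ε₃)) ∈ T1 :=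
  stmt_8_general Vec Form T1 T2 T3 dbar dβ P hhom hanti hdβForm hdβVec hPT3 hPT2 ε₁ ε₂ ε₃ hε₁ hε₂
    hε₃ hclosed2 hclosed3
end

section
/- Let P and ∂̄ be linear operators with ∂̄P + P∂̄ = Id, and suppose ε = ε₁ + ε₂ + ε₃ satisfies the Maurer–Cartan system [ε₁,ε₁] = 0, [ε₁,ε₂] + ∂̄ε₁ = 0, (1/2)[ε₂,ε₂] + [ε₁,ε₃] + ∂̄ε₂ = 0, ∂̄ε₃ = 0, together with the graded anticommutation identity ∂̄[ε₁, θ] = −[ε₁, ∂̄θ] + [∂̄ε₁, θ]. Define V(ε) = P([ε₁, Pε₃] − ε₂ − ε₃) and let ζ denote projection onto the (ε₂ + ε₃)-components (which annihilates all brackets of the form [ε₁, bivector-producing terms]). Then ζ(∂̄V(ε) + [ε₁, V(ε)] + ε) = −(1/2) P[ε₂,ε₂] + P[[ε₁,ε₂], Pε₃]; in particular this expression is quadratic in (ε₂, ε₃). -/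
/-!
Write `x = [ε₁, Pε₃] − ε₂ − ε₃`, so `V(ε) = P x`. The homotopy formula gives `∂̄V = x − P∂̄x`,
and the linear terms of `x + [ε₁, P x] + ε` cancel, leaving
`ε₁ + [ε₁, P[ε₁, Pε₃]] − [ε₁, Pε₂] − P∂̄x`. The Maurer–Cartan equations and the
anticommutation identity compute `∂̄x = ½[ε₂, ε₂] − [[ε₁, ε₂], Pε₃]`: the two copies of
`[ε₁, ε₃]` cancel. Applying `ζ` kills `ε₁` and the two bivector brackets.
-/

section HomotopyGauge

variable {M : Type*} [AddCommGroup M] [Module ℝ M]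
  (br : M →ₗ[ℝ] M →ₗ[ℝ] M) (dbar P : M →ₗ[ℝ] M) (ε₁ ε₂ ε₃ : M)

theorem dbar_apply_eq_of_homotopy (hhom : ∀ x, dbar (P x) + P (dbar x) = x) (x : M) :
    dbar (P x) = x - P (dbar x) :=
  eq_sub_of_add_eq (hhom x)

theorem dbar_gaugeArg_eq_of_maurerCartan (hhom : ∀ x, dbar (P x) + P (dbar x) = x)
    (hMC2 : br ε₁ ε₂ + dbar ε₁ = 0)
    (hMC3 : (1 / 2 : ℝ) • br ε₂ ε₂ + br ε₁ ε₃ + dbar ε₂ = 0)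
    (hMC4 : dbar ε₃ = 0)
    (hanti : ∀ θ, dbar (br ε₁ θ) = -br ε₁ (dbar θ) + br (dbar ε₁) θ) :
    dbar (br ε₁ (P ε₃) - ε₂ - ε₃) = (1 / 2 : ℝ) • br ε₂ ε₂ - br (br ε₁ ε₂) (P ε₃) := by
  have hdP₃ : dbar (P ε₃) = ε₃ := by
    rw [dbar_apply_eq_of_homotopy dbar P hhom, hMC4, map_zero, sub_zero]
  have hd₁ : dbar ε₁ = -br ε₁ ε₂ := eq_neg_of_add_eq_zero_right hMC2
  have hd₂ : dbar ε₂ = -((1 / 2 : ℝ) • br ε₂ ε₂ + br ε₁ ε₃) :=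
    eq_neg_of_add_eq_zero_right hMC3
  rw [map_sub, map_sub, hanti, hdP₃, hMC4, hd₁, hd₂, map_neg, LinearMap.neg_apply]
  abel

theorem dbar_gauge_add_br_gauge_add_eq (hhom : ∀ x, dbar (P x) + P (dbar x) = x) :
    dbar (P (br ε₁ (P ε₃) - ε₂ - ε₃)) + br ε₁ (P (br ε₁ (P ε₃) - ε₂ - ε₃))
        + (ε₁ + ε₂ + ε₃) =
      ε₁ + br ε₁ (P (br ε₁ (P ε₃))) - br ε₁ (P ε₂)
        - P (dbar (br ε₁ (P ε₃) - ε₂ - ε₃)) := by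
  rw [dbar_apply_eq_of_homotopy dbar P hhom, map_sub P, map_sub P, map_sub (br ε₁),
    map_sub (br ε₁)]
  abel

end HomotopyGauge

theorem stmt_19_general {M : Type*} [AddCommGroup M] [Module ℝ M]
    (br : M →ₗ[ℝ] M →ₗ[ℝ] M) (dbar P ζ : M →ₗ[ℝ] M)
    (hhom : ∀ x, dbar (P x) + P (dbar x) = x)
    (ε₁ ε₂ ε₃ : M)
    (hMC2 : br ε₁ ε₂ + dbar ε₁ = 0)
    (hMC3 : (1 / 2 : ℝ) • br ε₂ ε₂ + br ε₁ ε₃ + dbar ε₂ = 0)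
    (hMC4 : dbar ε₃ = 0)
    (hanti : ∀ θ, dbar (br ε₁ θ) = -br ε₁ (dbar θ) + br (dbar ε₁) θ)
    -- ζ is the type projection onto the (ε₂ + ε₃)-components:
    (hζ1 : ζ ε₁ = 0)
    -- ζ annihilates the bivector-producing bracket terms:
    (hζ4 : ζ (br ε₁ (P ε₂)) = 0)
    (hζ5 : ζ (br ε₁ (P (br ε₁ (P ε₃)))) = 0)
    -- ζ fixes the mixed-type and quadratic remainder terms:
    (hζ7 : ζ (P (br ε₂ ε₂)) = P (br ε₂ ε₂))
    (hζ8 : ζ (P (br (br ε₁ ε₂) (P ε₃))) = P (br (br ε₁ ε₂) (P ε₃))) :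
    ζ (dbar (P (br ε₁ (P ε₃) - ε₂ - ε₃)) + br ε₁ (P (br ε₁ (P ε₃) - ε₂ - ε₃))
        + (ε₁ + ε₂ + ε₃)) =
      -(1 / 2 : ℝ) • P (br ε₂ ε₂) + P (br (br ε₁ ε₂) (P ε₃)) := by
  rw [dbar_gauge_add_br_gauge_add_eq br dbar P ε₁ ε₂ ε₃ hhom,
    dbar_gaugeArg_eq_of_maurerCartan br dbar P ε₁ ε₂ ε₃ hhom hMC2 hMC3 hMC4 hanti]
  simp only [map_sub, map_add, map_smul, hζ1, hζ4, hζ5, hζ7, hζ8]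
  module

/-- with a chain homotopy ∂̄P + P∂̄ = Id, the Maurer–Cartan system for
ε = ε₁ + ε₂ + ε₃, the graded anticommutation identity
∂̄[ε₁,θ] = −[ε₁,∂̄θ] + [∂̄ε₁,θ], V(ε) = P([ε₁,Pε₃] − ε₂ − ε₃), and ζ the projection
onto the non-bivector components (annihilating all terms of the form [ε₁, ·] that
produce bivectors), one has
ζ(∂̄V(ε) + [ε₁,V(ε)] + ε) = −(1/2)P[ε₂,ε₂] + P[[ε₁,ε₂],Pε₃],
a quadratic expression in (ε₂, ε₃). -/
theorem stmt_19 {M : Type*} [AddCommGroup M] [Module ℝ M]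
    (br : M →ₗ[ℝ] M →ₗ[ℝ] M) (dbar P ζ : M →ₗ[ℝ] M)
    (hhom : ∀ x, dbar (P x) + P (dbar x) = x)
    (ε₁ ε₂ ε₃ : M)
    (hMC1 : br ε₁ ε₁ = 0)
    (hMC2 : br ε₁ ε₂ + dbar ε₁ = 0)
    (hMC3 : (1 / 2 : ℝ) • br ε₂ ε₂ + br ε₁ ε₃ + dbar ε₂ = 0)
    (hMC4 : dbar ε₃ = 0)
    (hanti : ∀ θ, dbar (br ε₁ θ) = -br ε₁ (dbar θ) + br (dbar ε₁) θ)
    -- ζ is the type projection onto the (ε₂ + ε₃)-components: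
    (hζ1 : ζ ε₁ = 0) (hζ2 : ζ ε₂ = ε₂) (hζ3 : ζ ε₃ = ε₃)
    -- ζ annihilates the bivector-producing bracket terms:
    (hζ4 : ζ (br ε₁ (P ε₂)) = 0)
    (hζ5 : ζ (br ε₁ (P (br ε₁ (P ε₃)))) = 0)
    -- ζ fixes the mixed-type and quadratic remainder terms:
    (hζ6 : ζ (br ε₁ (P ε₃)) = br ε₁ (P ε₃))
    (hζ7 : ζ (P (br ε₂ ε₂)) = P (br ε₂ ε₂))
    (hζ8 : ζ (P (br (br ε₁ ε₂) (P ε₃))) = P (br (br ε₁ ε₂) (P ε₃))) :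
    ζ (dbar (P (br ε₁ (P ε₃) - ε₂ - ε₃)) + br ε₁ (P (br ε₁ (P ε₃) - ε₂ - ε₃))
        + (ε₁ + ε₂ + ε₃)) =
      -(1 / 2 : ℝ) • P (br ε₂ ε₂) + P (br (br ε₁ ε₂) (P ε₃)) :=
  stmt_19_general br dbar P ζ hhom ε₁ ε₂ ε₃ hMC2 hMC3 hMC4 hanti hζ1 hζ4 hζ5 hζ7 hζ8
end
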